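/- arXiv:1601.02078 — 6 statements merged into one kernel-verified Lean document; each statement's English description precedes it below -/
import Mathlib

section
/- Let (x_n, y_n), n ≥ −k, be a well-defined solution of the system x_{n+1} = x_{n−k+1}^p · y_n / (a·y_{n−k}^p + b·y_n), y_{n+1} = y_{n−k+1}^p · x_n / (α·x_{n−k}^p + β·x_n), and set u_n = x_{n−k}^p / x_n, v_n = y_{n−k}^p / y_n. Then for every r with 0 ≤ r ≤ k−1 and every n ≥ 0, x_{kn+r} = x_{r−k}^{p^{n+1}} / ∏_{i=0}^{n} u_{ki+r}^{p^{n−i}} and y_{kn+r} = y_{r−k}^{p^{n+1}} / ∏_{i=0}^{n} v_{ki+r}^{p^{n−i}}. -/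
lemma aux_stmt4 (k p : ℕ) (f : ℤ → ℝ) (hf : ∀ n : ℤ, f n ≠ 0)
    (w : ℕ → ℝ) (hw : ∀ n : ℕ, w n = (f ((n : ℤ) - k)) ^ p / f n) (r : ℕ) :
    ∀ n : ℕ, f ((k : ℤ) * n + r) =
      (f ((r : ℤ) - k)) ^ (p ^ (n + 1)) /
        ∏ i ∈ Finset.range (n + 1), (w (k * i + r)) ^ (p ^ (n - i)) := by
  have hwne : ∀ m : ℕ, w m ≠ 0 := by
    intro m; rw [hw m]; exact div_ne_zero (pow_ne_zero _ (hf _)) (hf _)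
  have key : ∀ n : ℕ, f ((k : ℤ) * n + r) *
      ∏ i ∈ Finset.range (n + 1), (w (k * i + r)) ^ (p ^ (n - i)) =
      (f ((r : ℤ) - k)) ^ (p ^ (n + 1)) := by
    intro n
    induction n with
    | zero =>
      have h1 : w (k * 0 + r) = (f ((r : ℤ) - k)) ^ p / f r := by rw [hw]; norm_num
      rw [Finset.prod_range_one, Nat.sub_zero, pow_zero, pow_one, h1,
        show (k : ℤ) * (0 : ℕ) + r = (r : ℤ) by push_cast; ring, pow_one]
      field_simp
      exact mul_div_cancel_left₀ _ (hf _)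
    | succ n ih =>
      have hprod : ∏ i ∈ Finset.range (n + 1), (w (k * i + r)) ^ (p ^ (n + 1 - i)) =
          (∏ i ∈ Finset.range (n + 1), (w (k * i + r)) ^ (p ^ (n - i))) ^ p := by
        rw [← Finset.prod_pow]
        refine Finset.prod_congr rfl fun i hi => ?_
        have hi' : i ≤ n := Nat.lt_succ_iff.mp (Finset.mem_range.mp hi)
        rw [show n + 1 - i = (n - i) + 1 from by omega, pow_succ, pow_mul]
      have hwlast : w (k * (n + 1) + r) =
          (f ((k : ℤ) * n + r)) ^ p / f ((k : ℤ) * (n + 1) + r) := by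
        rw [hw]
        rw [show ((k * (n + 1) + r : ℕ) : ℤ) = (k : ℤ) * (n + 1) + r by push_cast; ring,
          show (k : ℤ) * (n + 1) + r - k = (k : ℤ) * n + r by ring]
      rw [Finset.prod_range_succ, Nat.sub_self, pow_zero, pow_one, hwlast, hprod]
      calc f ((k : ℤ) * ((n : ℕ) + 1 : ℕ) + r) *
            ((∏ i ∈ Finset.range (n + 1), (w (k * i + r)) ^ (p ^ (n - i))) ^ p *
              ((f ((k : ℤ) * n + r)) ^ p / f ((k : ℤ) * (n + 1) + r)))
          = (f ((k : ℤ) * n + r) *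
              ∏ i ∈ Finset.range (n + 1), (w (k * i + r)) ^ (p ^ (n - i))) ^ p := by
            rw [mul_pow]
            have h := hf ((k : ℤ) * (n + 1) + r)
            have hcast : ((k : ℤ) * ((n : ℕ) + 1 : ℕ) + r) = (k : ℤ) * (n + 1) + r := by
              push_cast; ring
            rw [hcast]
            field_simp
        _ = ((f ((r : ℤ) - k)) ^ (p ^ (n + 1))) ^ p := by rw [ih]
        _ = (f ((r : ℤ) - k)) ^ (p ^ (n + 1 + 1)) := by rw [← pow_mul, ← pow_succ]
  intro n
  have hpne : (∏ i ∈ Finset.range (n + 1), (w (k * i + r)) ^ (p ^ (n - i))) ≠ 0 :=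
    Finset.prod_ne_zero_iff.mpr fun i _ => pow_ne_zero _ (hwne _)
  rw [eq_div_iff hpne]
  exact key n

theorem stmt_4 (k p : ℕ) (hk : 1 ≤ k) (a b α β : ℝ)
    (x y : ℤ → ℝ)
    (hx : ∀ n : ℤ, x n ≠ 0) (hy : ∀ n : ℤ, y n ≠ 0)
    (hdx : ∀ n : ℤ, 0 ≤ n → a * (y (n - k)) ^ p + b * y n ≠ 0)
    (hdy : ∀ n : ℤ, 0 ≤ n → α * (x (n - k)) ^ p + β * x n ≠ 0)
    (hrecx : ∀ n : ℤ, 0 ≤ n →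
      x (n + 1) = (x (n - k + 1)) ^ p * y n / (a * (y (n - k)) ^ p + b * y n))
    (hrecy : ∀ n : ℤ, 0 ≤ n →
      y (n + 1) = (y (n - k + 1)) ^ p * x n / (α * (x (n - k)) ^ p + β * x n))
    (u v : ℕ → ℝ)
    (hu : ∀ n : ℕ, u n = (x ((n : ℤ) - k)) ^ p / x n)
    (hv : ∀ n : ℕ, v n = (y ((n : ℤ) - k)) ^ p / y n) :
    ∀ r : ℕ, r ≤ k - 1 → ∀ n : ℕ,
      x ((k : ℤ) * n + r) =
        (x ((r : ℤ) - k)) ^ (p ^ (n + 1)) /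
          ∏ i ∈ Finset.range (n + 1), (u (k * i + r)) ^ (p ^ (n - i)) ∧
      y ((k : ℤ) * n + r) =
        (y ((r : ℤ) - k)) ^ (p ^ (n + 1)) /
          ∏ i ∈ Finset.range (n + 1), (v (k * i + r)) ^ (p ^ (n - i)) := by
  intro r _ n
  exact ⟨aux_stmt4 k p x hx u hu r n, aux_stmt4 k p y hy v hv r n⟩
end

section
/- Let (x_n, y_n), n ≥ −k, be a positive well-defined solution of the system x_{n+1} = x_{n−k+1}·y_n/(a·y_{n−k} + b·y_n), y_{n+1} = y_{n−k+1}·x_n/(α·x_{n−k} + β·x_n), with a, α ≥ 0 and b ≥ 1, β ≥ 1. Then for each i with 0 ≤ i ≤ k−1, the subsequence (x_{kn−i})_{n≥0} is decreasing and (y_{kn−i})_{n≥0} is decreasing; in particular the solution is bounded. -/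
theorem stmt_7 (k : ℕ) (hk : 1 ≤ k) (a b α β : ℝ)
    (ha : 0 ≤ a) (hα : 0 ≤ α) (hb : 1 ≤ b) (hβ : 1 ≤ β)
    (x y : ℤ → ℝ)
    (hxpos : ∀ n : ℤ, -(k : ℤ) ≤ n → 0 < x n)
    (hypos : ∀ n : ℤ, -(k : ℤ) ≤ n → 0 < y n)
    (hdx : ∀ n : ℤ, 0 ≤ n → a * y (n - k) + b * y n ≠ 0)
    (hdy : ∀ n : ℤ, 0 ≤ n → α * x (n - k) + β * x n ≠ 0)
    (hrecx : ∀ n : ℤ, 0 ≤ n →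
      x (n + 1) = x (n - k + 1) * y n / (a * y (n - k) + b * y n))
    (hrecy : ∀ n : ℤ, 0 ≤ n →
      y (n + 1) = y (n - k + 1) * x n / (α * x (n - k) + β * x n)) :
    (∀ i : ℕ, i ≤ k - 1 → ∀ n : ℕ,
      x ((k : ℤ) * (n + 1) - i) ≤ x ((k : ℤ) * n - i) ∧
      y ((k : ℤ) * (n + 1) - i) ≤ y ((k : ℤ) * n - i)) ∧
    (∃ M : ℝ, ∀ n : ℤ, 0 ≤ n → x n ≤ M ∧ y n ≤ M) := by
  have hk1 : (1 : ℤ) ≤ (k : ℤ) := by exact_mod_cast hk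
  -- key step lemmas
  have stepx : ∀ n : ℤ, 0 ≤ n → x (n + 1) ≤ x (n - k + 1) := by
    intro n hn
    have hy : 0 < y n := hypos n (by linarith)
    have hyk : 0 < y (n - k) := hypos (n - k) (by linarith)
    have hx : 0 < x (n - k + 1) := hxpos (n - k + 1) (by linarith)
    have hD : 0 < a * y (n - k) + b * y n := by
      have h1 : 0 ≤ a * y (n - k) := mul_nonneg ha hyk.le
      nlinarith
    rw [hrecx n hn, div_le_iff₀ hD]
    have h1 : 0 ≤ a * y (n - k) := mul_nonneg ha hyk.le
    nlinarith [mul_nonneg hx.le h1, mul_le_mul_of_nonneg_left (show y n ≤ b * y n by nlinarith) hx.le]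
  have stepy : ∀ n : ℤ, 0 ≤ n → y (n + 1) ≤ y (n - k + 1) := by
    intro n hn
    have hy : 0 < x n := hxpos n (by linarith)
    have hyk : 0 < x (n - k) := hxpos (n - k) (by linarith)
    have hx : 0 < y (n - k + 1) := hypos (n - k + 1) (by linarith)
    have hD : 0 < α * x (n - k) + β * x n := by
      have h1 : 0 ≤ α * x (n - k) := mul_nonneg hα hyk.le
      nlinarith
    rw [hrecy n hn, div_le_iff₀ hD]
    have h1 : 0 ≤ α * x (n - k) := mul_nonneg hα hyk.le
    nlinarith [mul_nonneg hx.le h1, mul_le_mul_of_nonneg_left (show x n ≤ β * x n by nlinarith) hx.le]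
  have stepx' : ∀ m : ℤ, 1 ≤ m → x m ≤ x (m - k) := by
    intro m hm
    have := stepx (m - 1) (by linarith)
    simpa [sub_add_cancel, sub_right_comm] using this
  have stepy' : ∀ m : ℤ, 1 ≤ m → y m ≤ y (m - k) := by
    intro m hm
    have := stepy (m - 1) (by linarith)
    simpa [sub_add_cancel, sub_right_comm] using this
  constructor
  · intro i hi n
    have hik : (i : ℤ) ≤ (k : ℤ) - 1 := by
      have : i ≤ k - 1 := hi
      omega
    have hm : (1 : ℤ) ≤ (k : ℤ) * (n + 1) - i := by
      have hn0 : (0 : ℤ) ≤ (n : ℤ) := Int.ofNat_nonneg n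
      nlinarith
    constructor
    · have := stepx' ((k : ℤ) * (n + 1) - i) hm
      have heq : (k : ℤ) * (n + 1) - i - k = (k : ℤ) * n - i := by ring
      rwa [heq] at this
    · have := stepy' ((k : ℤ) * (n + 1) - i) hm
      have heq : (k : ℤ) * (n + 1) - i - k = (k : ℤ) * n - i := by ring
      rwa [heq] at this
  · -- boundedness
    have hne : (Finset.Icc (-(k : ℤ)) 0).Nonempty := ⟨0, by simp⟩
    set M := (Finset.Icc (-(k : ℤ)) 0).sup' hne (fun j => max (x j) (y j)) with hM
    refine ⟨M, ?_⟩
    have hbase : ∀ n : ℤ, -(k : ℤ) ≤ n → n ≤ 0 → x n ≤ M ∧ y n ≤ M := by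
      intro n h1 h2
      have hmem : n ∈ Finset.Icc (-(k : ℤ)) 0 := Finset.mem_Icc.mpr ⟨h1, h2⟩
      have := Finset.le_sup' (fun j => max (x j) (y j)) hmem
      exact ⟨le_trans (le_max_left _ _) this, le_trans (le_max_right _ _) this⟩
    have key : ∀ m : ℕ, ∀ n : ℤ, -(k : ℤ) ≤ n → n ≤ m → x n ≤ M ∧ y n ≤ M := by
      intro m
      induction m with
      | zero => intro n h1 h2; exact hbase n h1 (by exact_mod_cast h2)
      | succ m ih =>
        intro n h1 h2
        by_cases hcase : n ≤ m
        · exact ih n h1 hcase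
        · have hn1 : (1 : ℤ) ≤ n := by
            push_neg at hcase
            have : (0 : ℤ) ≤ (m : ℤ) := Int.ofNat_nonneg m
            omega
          have hprev := ih (n - k) (by omega) (by push_neg at hcase; omega)
          exact ⟨le_trans (stepx' n hn1) hprev.1, le_trans (stepy' n hn1) hprev.2⟩
    intro n hn
    exact key n.toNat n (by linarith) (by omega)
end

section
/- Let (x_n, y_n), n ≥ −k, be a positive well-defined solution of the system x_{n+1} = x_{n−k+1}·y_n/(a·y_{n−k} + b·y_n), y_{n+1} = y_{n−k+1}·x_n/(α·x_{n−k} + β·x_n), with b, β ≥ 0, a ≥ 1, α ≥ 1, a·y_{−k} ≥ y_0 and α·x_{−k} ≥ x_0. Then x_{n+1} ≤ x_{n−k+1} and y_{n+1} ≤ y_{n−k+1} for all n ≥ 0, and hence the solution is bounded: x_n ≤ max{x_{−i} : 0 ≤ i ≤ k−1} and y_n ≤ max{y_{−i} : 0 ≤ i ≤ k−1} for all n ≥ 0. -/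
/-!
By induction on `n`, a solution satisfies `x n ≤ α x (n - k)` and `y n ≤ a y (n - k)`: given
`y n ≤ a y (n - k)`, the factor `y n / (a y (n - k) + b y n)` in the recurrence for `x` is at
most `1`, so `x (n + 1) ≤ x (n - k + 1) ≤ α x (n + 1 - k)` (using `α ≥ 1`), and symmetrically
for `y`. The same estimate gives the lag-`k` monotonicity, and following the chain
`n, n - k, n - 2k, …` down to the initial window `{-(k - 1), …, 0}` gives the bounds.
-/

theorem mul_div_add_le_self {u v w a b : ℝ} (hu : 0 ≤ u) (hv : 0 < v) (hb : 0 ≤ b)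
    (hvw : v ≤ a * w) : u * v / (a * w + b * v) ≤ u := by
  have hD : v ≤ a * w + b * v := le_add_of_le_of_nonneg hvw (mul_nonneg hb hv.le)
  rw [mul_div_assoc]
  exact mul_le_of_le_one_right hu (div_le_one_of_le₀ hD (hv.le.trans hD))

theorem le_sup'_of_le_sub_lag {k : ℕ} {u : ℤ → ℝ} (hne : (Finset.range k).Nonempty)
    (hu : ∀ n : ℤ, 0 ≤ n → u (n + 1) ≤ u (n - k + 1)) :
    ∀ n : ℤ, -(k : ℤ) < n → u n ≤ (Finset.range k).sup' hne (fun i => u (-(i : ℤ))) := by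
  have hk : k ≠ 0 := Finset.nonempty_range_iff.1 hne
  intro n
  induction n using Int.strongRec (m := 1) with
  | lt n hn =>
    intro hkn
    have hmem : (-n).toNat ∈ Finset.range k := Finset.mem_range.2 (by omega)
    have hle := Finset.le_sup' (fun i : ℕ => u (-(i : ℤ))) hmem
    rwa [Int.toNat_of_nonneg (by omega), neg_neg] at hle
  | ge n hn ih =>
    intro _
    have hstep := hu (n - 1) (by omega)
    rw [sub_add_cancel, sub_right_comm, sub_add_cancel] at hstep
    exact hstep.trans (ih (n - k) (by omega) (by omega))

section RationalSystem

variable {k : ℕ} {a b α β : ℝ} {x y : ℤ → ℝ}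

theorem succ_le_sub_lag_add_one (hb : 0 ≤ b) (hxpos : ∀ n : ℤ, -(k : ℤ) ≤ n → 0 < x n)
    (hypos : ∀ n : ℤ, -(k : ℤ) ≤ n → 0 < y n)
    (hrecx : ∀ n : ℤ, 0 ≤ n →
      x (n + 1) = x (n - k + 1) * y n / (a * y (n - k) + b * y n))
    {n : ℤ} (hn : 0 ≤ n) (hy : y n ≤ a * y (n - k)) : x (n + 1) ≤ x (n - k + 1) :=
  hrecx n hn ▸ mul_div_add_le_self (hxpos _ (by omega)).le (hypos n (by omega)) hb hy

theorem le_mul_sub_lag (ha : 1 ≤ a) (hα : 1 ≤ α) (hb : 0 ≤ b) (hβ : 0 ≤ β)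
    (hxpos : ∀ n : ℤ, -(k : ℤ) ≤ n → 0 < x n)
    (hypos : ∀ n : ℤ, -(k : ℤ) ≤ n → 0 < y n)
    (hinitx : α * x (-(k : ℤ)) ≥ x 0) (hinity : a * y (-(k : ℤ)) ≥ y 0)
    (hrecx : ∀ n : ℤ, 0 ≤ n →
      x (n + 1) = x (n - k + 1) * y n / (a * y (n - k) + b * y n))
    (hrecy : ∀ n : ℤ, 0 ≤ n →
      y (n + 1) = y (n - k + 1) * x n / (α * x (n - k) + β * x n)) :
    ∀ n : ℤ, 0 ≤ n → x n ≤ α * x (n - k) ∧ y n ≤ a * y (n - k) := by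
  refine Int.leInduction (by simpa using ⟨hinitx, hinity⟩) fun n hn ih => ?_
  have hx := succ_le_sub_lag_add_one hb hxpos hypos hrecx hn ih.2
  have hy := succ_le_sub_lag_add_one hβ hypos hxpos hrecy hn ih.1
  rw [add_sub_right_comm]
  exact ⟨hx.trans (le_mul_of_one_le_left (hxpos _ (by omega)).le hα),
    hy.trans (le_mul_of_one_le_left (hypos _ (by omega)).le ha)⟩

end RationalSystem

theorem stmt_8 (k : ℕ) (hk : 1 ≤ k) (a b α β : ℝ)
    (ha : 1 ≤ a) (hα : 1 ≤ α) (hb : 0 ≤ b) (hβ : 0 ≤ β)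
    (x y : ℤ → ℝ)
    (hxpos : ∀ n : ℤ, -(k : ℤ) ≤ n → 0 < x n)
    (hypos : ∀ n : ℤ, -(k : ℤ) ≤ n → 0 < y n)
    (hinitx : α * x (-(k : ℤ)) ≥ x 0)
    (hinity : a * y (-(k : ℤ)) ≥ y 0)
    (hrecx : ∀ n : ℤ, 0 ≤ n →
      x (n + 1) = x (n - k + 1) * y n / (a * y (n - k) + b * y n))
    (hrecy : ∀ n : ℤ, 0 ≤ n →
      y (n + 1) = y (n - k + 1) * x n / (α * x (n - k) + β * x n)) :
    (∀ n : ℤ, 0 ≤ n → x (n + 1) ≤ x (n - k + 1) ∧ y (n + 1) ≤ y (n - k + 1)) ∧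
    (∀ n : ℤ, 0 ≤ n →
      x n ≤ (Finset.range k).sup' (Finset.nonempty_range_iff.mpr (by omega))
        (fun i => x (-(i : ℤ))) ∧
      y n ≤ (Finset.range k).sup' (Finset.nonempty_range_iff.mpr (by omega))
        (fun i => y (-(i : ℤ)))) := by
  have hinv := le_mul_sub_lag ha hα hb hβ hxpos hypos hinitx hinity hrecx hrecy
  have hdec : ∀ n : ℤ, 0 ≤ n → x (n + 1) ≤ x (n - k + 1) ∧ y (n + 1) ≤ y (n - k + 1) :=
    fun n hn => ⟨succ_le_sub_lag_add_one hb hxpos hypos hrecx hn (hinv n hn).2,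
      succ_le_sub_lag_add_one hβ hypos hxpos hrecy hn (hinv n hn).1⟩
  exact ⟨hdec, fun n hn =>
    ⟨le_sup'_of_le_sub_lag _ (fun n hn => (hdec n hn).1) n (by omega),
      le_sup'_of_le_sub_lag _ (fun n hn => (hdec n hn).2) n (by omega)⟩⟩
end

section
/- Let (x_n, y_n), n ≥ −k, be a positive well-defined solution of the system x_{n+1} = x_{n−k+1}·y_n/(a·y_{n−k} + b·y_n), y_{n+1} = y_{n−k+1}·x_n/(α·x_{n−k} + β·x_n). If the solution is periodic with period k, i.e., (x_n, y_n) = (x_{n−k}, y_{n−k}) for all n ≥ 0, then (x_0, y_0) = (x_{−k}, y_{−k}) and a + b = 1 and α + β = 1. -/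
theorem stmt_9 (k : ℕ) (hk : 1 ≤ k) (a b α β : ℝ)
    (x y : ℤ → ℝ)
    (hxpos : ∀ n : ℤ, -(k : ℤ) ≤ n → 0 < x n)
    (hypos : ∀ n : ℤ, -(k : ℤ) ≤ n → 0 < y n)
    (hdx : ∀ n : ℤ, 0 ≤ n → a * y (n - k) + b * y n ≠ 0)
    (hdy : ∀ n : ℤ, 0 ≤ n → α * x (n - k) + β * x n ≠ 0)
    (hrecx : ∀ n : ℤ, 0 ≤ n →
      x (n + 1) = x (n - k + 1) * y n / (a * y (n - k) + b * y n))
    (hrecy : ∀ n : ℤ, 0 ≤ n →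
      y (n + 1) = y (n - k + 1) * x n / (α * x (n - k) + β * x n))
    (hper : ∀ n : ℤ, 0 ≤ n → x n = x (n - k) ∧ y n = y (n - k)) :
    x 0 = x (-(k : ℤ)) ∧ y 0 = y (-(k : ℤ)) ∧ a + b = 1 ∧ α + β = 1 := by
  have h0 := hper 0 le_rfl
  have hx0 : x 0 = x (-(k:ℤ)) := by simpa using h0.1
  have hy0 : y 0 = y (-(k:ℤ)) := by simpa using h0.2
  refine ⟨hx0, hy0, ?_, ?_⟩
  · have hrec := hrecx 0 le_rfl
    have hper1 := (hper 1 (by norm_num)).1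
    have hd := hdx 0 le_rfl
    simp only [zero_sub, zero_add] at hrec hd
    rw [← hy0] at hrec hd
    have hxk : 0 < x (-(k:ℤ) + 1) := hxpos _ (by linarith)
    have hy0p : 0 < y 0 := hypos _ (by linarith)
    rw [hper1, show (1:ℤ) - k = -(k:ℤ) + 1 by ring] at hrec
    rw [eq_div_iff hd] at hrec
    nlinarith [hxk, hy0p, mul_pos hxk hy0p]
  · have hrec := hrecy 0 le_rfl
    have hper1 := (hper 1 (by norm_num)).2
    have hd := hdy 0 le_rfl
    simp only [zero_sub, zero_add] at hrec hd
    rw [← hx0] at hrec hd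
    have hyk : 0 < y (-(k:ℤ) + 1) := hypos _ (by linarith)
    have hx0p : 0 < x 0 := hxpos _ (by linarith)
    rw [hper1, show (1:ℤ) - k = -(k:ℤ) + 1 by ring] at hrec
    rw [eq_div_iff hd] at hrec
    nlinarith [hyk, hx0p, mul_pos hyk hx0p]
end

section
/- Let (x_n, y_n), n ≥ −k, be a positive well-defined solution of the system x_{n+1} = x_{n−k+1}·y_n/(a·y_{n−k} + b·y_n), y_{n+1} = y_{n−k+1}·x_n/(α·x_{n−k} + β·x_n). If (x_0, y_0) = (x_{−k}, y_{−k}) and a + b = 1 and α + β = 1, then (x_n, y_n) = (x_{n−k}, y_{n−k}) for all n ≥ 0, i.e., the solution is periodic with period k. -/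
theorem stmt_10 (k : ℕ) (hk : 1 ≤ k) (a b α β : ℝ)
    (hab : a + b = 1) (hαβ : α + β = 1)
    (x y : ℤ → ℝ)
    (hxpos : ∀ n : ℤ, -(k : ℤ) ≤ n → 0 < x n)
    (hypos : ∀ n : ℤ, -(k : ℤ) ≤ n → 0 < y n)
    (hdx : ∀ n : ℤ, 0 ≤ n → a * y (n - k) + b * y n ≠ 0)
    (hdy : ∀ n : ℤ, 0 ≤ n → α * x (n - k) + β * x n ≠ 0)
    (hrecx : ∀ n : ℤ, 0 ≤ n →
      x (n + 1) = x (n - k + 1) * y n / (a * y (n - k) + b * y n))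
    (hrecy : ∀ n : ℤ, 0 ≤ n →
      y (n + 1) = y (n - k + 1) * x n / (α * x (n - k) + β * x n))
    (hinit : x 0 = x (-(k : ℤ)) ∧ y 0 = y (-(k : ℤ))) :
    ∀ n : ℤ, 0 ≤ n → x n = x (n - k) ∧ y n = y (n - k) := by
  have H : ∀ m : ℕ, x m = x (m - k) ∧ y m = y (m - k) := by
    intro m
    induction m with
    | zero => simpa using hinit
    | succ n ih =>
      obtain ⟨hx, hy⟩ := ih
      have hn : (0 : ℤ) ≤ (n : ℤ) := Int.ofNat_nonneg n
      have hkn : -(k : ℤ) ≤ (n : ℤ) := le_trans (by simp) hn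
      have hyn : y n ≠ 0 := (hypos n hkn).ne'
      have hxn : x n ≠ 0 := (hxpos n hkn).ne'
      push_cast
      constructor
      · rw [hrecx n hn, hy]
        rw [show a * y ((n:ℤ) - k) + b * y ((n:ℤ) - k) = y ((n:ℤ) - k) by
          rw [← add_mul, hab, one_mul]]
        rw [mul_div_assoc, div_self (hy ▸ hyn), mul_one]
        congr 1; ring
      · rw [hrecy n hn, hx]
        rw [show α * x ((n:ℤ) - k) + β * x ((n:ℤ) - k) = x ((n:ℤ) - k) by
          rw [← add_mul, hαβ, one_mul]]
        rw [mul_div_assoc, div_self (hx ▸ hxn), mul_one]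
        congr 1; ring
  intro n hn
  obtain ⟨m, rfl⟩ := Int.eq_ofNat_of_zero_le hn
  exact H m
end

section
/- Let (x_n, y_n), n ≥ −k, be a positive well-defined solution of x_{n+1} = x_{n−k+1}·y_n/(a·y_{n−k} + b·y_n), y_{n+1} = y_{n−k+1}·x_n/(α·x_{n−k} + β·x_n), with k = 2l even. Define u_n = x_{n−k}/x_n for n ≥ 0 and suppose aα ≠ 1. If additionally (aβ+b)/(1−aα) = 1 and x_{−k} = x_0, then u_{2n} = 1 for all n ≥ 0, and x_{kn+2r} = x_{2r−k} for every n ≥ 0 and every r with 0 ≤ r ≤ l. -/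
theorem stmt_18 (l : ℕ) (hl : 1 ≤ l) (k : ℕ) (hkl : k = 2 * l)
    (a b α β : ℝ) (haα : a * α ≠ 1)
    (hA : (a * β + b) / (1 - a * α) = 1)
    (x y : ℤ → ℝ)
    (hxpos : ∀ n : ℤ, -(k : ℤ) ≤ n → 0 < x n)
    (hypos : ∀ n : ℤ, -(k : ℤ) ≤ n → 0 < y n)
    (hrecx : ∀ n : ℤ, 0 ≤ n →
      x (n + 1) = x (n - k + 1) * y n / (a * y (n - k) + b * y n))
    (hrecy : ∀ n : ℤ, 0 ≤ n →
      y (n + 1) = y (n - k + 1) * x n / (α * x (n - k) + β * x n))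
    (u : ℕ → ℝ) (hu : ∀ n : ℕ, u n = x ((n : ℤ) - k) / x n)
    (hinit : x (-(k : ℤ)) = x 0) :
    (∀ n : ℕ, u (2 * n) = 1) ∧
    (∀ n : ℕ, ∀ r : ℕ, r ≤ l →
      x ((k : ℤ) * n + 2 * r) = x (2 * (r : ℤ) - k)) := by
  have hk0 : (0:ℤ) ≤ (k:ℤ) := Int.ofNat_nonneg k
  have hden : (1 : ℝ) - a * α ≠ 0 := sub_ne_zero.mpr (Ne.symm haα)
  have hab : a * β + b = 1 - a * α := by
    field_simp at hA; linarith
  have hx : ∀ n : ℤ, 0 ≤ n → 0 < x n := fun n hn => hxpos n (by linarith)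
  have hy : ∀ n : ℤ, 0 ≤ n → 0 < y n := fun n hn => hypos n (by linarith)
  have hstepu : ∀ n : ℤ, 0 ≤ n →
      x (n - k + 1) / x (n + 1) = a * (y (n - k) / y n) + b := by
    intro n hn
    have h1 : 0 < x (n - k + 1) := hxpos _ (by omega)
    have h2 : 0 < x (n + 1) := hx _ (by omega)
    have h3 : 0 < y n := hy _ hn
    have h4 : 0 < y (n - k) := hypos _ (by omega)
    have hr := hrecx n hn
    have hD : 0 < a * y (n - k) + b * y n := by
      rcases lt_trichotomy (a * y (n - k) + b * y n) 0 with h | h | h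
      · exfalso
        rw [hr] at h2
        have : x (n - k + 1) * y n / (a * y (n - k) + b * y n) < 0 :=
          div_neg_of_pos_of_neg (by positivity) h
        linarith
      · exfalso; rw [h, div_zero] at hr; linarith [hr ▸ h2]
      · exact h
    rw [hr]
    field_simp
  have hstepv : ∀ n : ℤ, 0 ≤ n →
      y (n - k + 1) / y (n + 1) = α * (x (n - k) / x n) + β := by
    intro n hn
    have h1 : 0 < y (n - k + 1) := hypos _ (by omega)
    have h2 : 0 < y (n + 1) := hy _ (by omega)
    have h3 : 0 < x n := hx _ hn
    have h4 : 0 < x (n - k) := hxpos _ (by omega)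
    have hr := hrecy n hn
    have hD : 0 < α * x (n - k) + β * x n := by
      rcases lt_trichotomy (α * x (n - k) + β * x n) 0 with h | h | h
      · exfalso
        rw [hr] at h2
        have : y (n - k + 1) * x n / (α * x (n - k) + β * x n) < 0 :=
          div_neg_of_pos_of_neg (by positivity) h
        linarith
      · exfalso; rw [h, div_zero] at hr; linarith [hr ▸ h2]
      · exact h
    rw [hr]
    field_simp
  -- key claim: x (2n - k) = x (2n) for all n : ℕ
  have hu2 : ∀ n : ℕ, x (2 * (n : ℤ) - k) = x (2 * (n : ℤ)) := by
    intro n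
    induction n with
    | zero => simpa using hinit
    | succ n ih =>
      have hn2 : (0:ℤ) ≤ 2 * (n : ℤ) := by positivity
      have hv := hstepv (2 * (n : ℤ)) hn2
      have hx2 : x (2 * (n : ℤ)) ≠ 0 := (hx _ hn2).ne'
      rw [ih, div_self hx2] at hv
      have hu1 := hstepu (2 * (n : ℤ) + 1) (by positivity)
      have e1 : (2 * (n : ℤ) + 1 - k) = 2 * (n : ℤ) - k + 1 := by ring
      rw [e1, hv] at hu1
      have hval : a * (α * 1 + β) + b = 1 := by
        have : a * (α * 1 + β) + b = a * α + (a * β + b) := by ring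
        rw [this, hab]; ring
      rw [hval] at hu1
      have h1 : 0 < x (2 * (n : ℤ) + 1 + 1) := hx _ (by positivity)
      have := (div_eq_one_iff_eq h1.ne').mp hu1
      have e2 : 2 * ((n : ℤ) + 1) - k = 2 * (n : ℤ) - k + 1 + 1 := by ring
      have e3 : 2 * ((n : ℤ) + 1) = 2 * (n : ℤ) + 1 + 1 := by ring
      push_cast
      rw [e2, e3, this]
  constructor
  · intro n
    have hc : ((2 * n : ℕ) : ℤ) = 2 * (n : ℤ) := by push_cast; ring
    rw [hu, hc, hu2 n, div_self (hx _ (by positivity)).ne']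
  · intro n r hr
    induction n with
    | zero =>
      have e : (k : ℤ) * (0 : ℕ) + 2 * (r : ℤ) = 2 * (r : ℤ) := by push_cast; ring
      rw [e, ← hu2 r]
    | succ n ih =>
      have hkl' : (k : ℤ) = 2 * (l : ℤ) := by exact_mod_cast hkl
      have hm := hu2 (l * (n + 1) + r)
      have e1 : 2 * ((↑(l * (n + 1) + r) : ℤ)) - k = (k : ℤ) * n + 2 * r := by
        push_cast [hkl']; ring
      have e2 : 2 * ((↑(l * (n + 1) + r) : ℤ)) = (k : ℤ) * (↑(n + 1) : ℤ) + 2 * r := by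
        push_cast [hkl']; ring
      rw [e1, e2] at hm
      rw [hm] at ih
      exact ih
end
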